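/- For the hyperbolic cross index set $\Lambda^{HC}_n = \{\mathbf{n} \in \mathbb{N}_0^d : \prod_{k=1}^d (n_k + 1) \leq n+1\}$, the cardinality satisfies $|\Lambda^{HC}_n| \leq \lfloor (n+1)(1 + \log(n+1))^{d-1} \rfloor$. -/

import Mathlib

/-!
Splitting off the first coordinate `m 0 = j`, the remaining coordinates form a hyperbolic cross
of size `⌊N / (j + 1)⌋` in one dimension less. Induction on the dimension then bounds the
cardinality in dimension `d + 1` by `N * H_N ^ d`, where `H_N = ∑_{j < N} 1 / (j + 1)` is the
harmonic number, and `H_N ≤ 1 + log N`.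
-/

open Finset

lemma harmonic_mono : Monotone harmonic :=
  monotone_nat_of_le_succ fun n => by
    rw [harmonic_succ]; exact le_add_of_nonneg_right (by positivity)

lemma harmonic_nonneg (n : ℕ) : 0 ≤ harmonic n :=
  sum_nonneg fun _ _ => by positivity

def hyperbolicCross (d N : ℕ) : Finset (Fin d → ℕ) :=
  (Fintype.piFinset fun _ => range N).filter fun m => ∏ k, (m k + 1) ≤ N

lemma mem_hyperbolicCross {d N : ℕ} {m : Fin d → ℕ} :
    m ∈ hyperbolicCross d N ↔ ∏ k, (m k + 1) ≤ N := by
  simp only [hyperbolicCross, mem_filter, Fintype.mem_piFinset, mem_range, and_iff_right_iff_imp]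
  intro h k
  have : m k + 1 ≤ ∏ k, (m k + 1) :=
    single_le_prod' (fun i _ => Nat.le_add_left 1 (m i)) (mem_univ k)
  omega

lemma card_hyperbolicCross_succ_le (d N : ℕ) :
    #(hyperbolicCross (d + 1) N) ≤ ∑ j ∈ range N, #(hyperbolicCross d (N / (j + 1))) := by
  rw [← card_sigma]
  refine card_le_card_of_injOn (fun m => ⟨m 0, Fin.tail m⟩) (fun m hm => ?_)
    fun m _ m' _ h => ?_
  · rw [mem_coe, mem_hyperbolicCross, Fin.prod_univ_succ] at hm
    have htail : (m 0 + 1) * ∏ k : Fin d, (Fin.tail m k + 1) ≤ N := hm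
    have hpos : 0 < ∏ k : Fin d, (Fin.tail m k + 1) := prod_pos fun _ _ => Nat.succ_pos _
    simp only [mem_coe, mem_sigma, mem_range, mem_hyperbolicCross]
    exact ⟨by nlinarith, (Nat.le_div_iff_mul_le (Nat.succ_pos _)).2 (by linarith)⟩
  · rw [← Fin.cons_self_tail m, ← Fin.cons_self_tail m']
    obtain ⟨h0, htail⟩ := Sigma.mk.inj_iff.1 h
    rw [h0, eq_of_heq htail]

theorem card_hyperbolicCross_succ_le_mul_harmonic_pow (d N : ℕ) :
    (#(hyperbolicCross (d + 1) N) : ℚ) ≤ N * harmonic N ^ d := by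
  induction d generalizing N with
  | zero =>
    rw [pow_zero, mul_one, Nat.cast_le]
    calc #(hyperbolicCross 1 N) ≤ ∑ j ∈ range N, #(hyperbolicCross 0 (N / (j + 1))) :=
          card_hyperbolicCross_succ_le 0 N
      _ ≤ ∑ j ∈ range N, 1 := sum_le_sum fun _ _ => card_le_one_of_subsingleton _
      _ = N := by simp
  | succ d ih =>
    calc (#(hyperbolicCross (d + 2) N) : ℚ)
        ≤ ∑ j ∈ range N, (#(hyperbolicCross (d + 1) (N / (j + 1))) : ℚ) := by
          exact_mod_cast card_hyperbolicCross_succ_le (d + 1) N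
      _ ≤ ∑ j ∈ range N, N * (↑(j + 1))⁻¹ * harmonic N ^ d := by
          refine sum_le_sum fun j _ => (ih _).trans ?_
          have hdiv : ((N / (j + 1) : ℕ) : ℚ) ≤ N * (↑(j + 1))⁻¹ := by
            rw [← div_eq_mul_inv]; exact Nat.cast_div_le
          gcongr
          · exact pow_nonneg (harmonic_nonneg _) d
          · exact harmonic_nonneg _
          · exact harmonic_mono (Nat.div_le_self N (j + 1))
      _ = N * harmonic N ^ (d + 1) := by
          rw [← sum_mul, ← mul_sum, pow_succ', harmonic]
          ring

theorem hyperbolic_cross_card_le_general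
    {d : ℕ} (n : ℕ) (S : Finset (Fin d → ℕ))
    (hS : ∀ m : Fin d → ℕ, m ∈ S ↔ ∏ k, (m k + 1) ≤ n + 1) :
    (S.card : ℤ) ≤ ⌊((n : ℝ) + 1) * (1 + Real.log ((n : ℝ) + 1)) ^ (d - 1)⌋ := by
  rw [Int.le_floor, Int.cast_natCast]
  cases d with
  | zero =>
    have : #S ≤ n + 1 := (card_le_one_of_subsingleton S).trans (Nat.le_add_left 1 n)
    simpa using (Nat.cast_le (α := ℝ)).2 this
  | succ d =>
    have hS : S = hyperbolicCross (d + 1) (n + 1) :=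
      ext fun m => (hS m).trans mem_hyperbolicCross.symm
    have hharm : (harmonic (n + 1) : ℝ) ≤ 1 + Real.log ((n : ℝ) + 1) := by
      exact_mod_cast harmonic_le_one_add_log (n + 1)
    calc (#S : ℝ) ≤ (n + 1 : ℕ) * (harmonic (n + 1) : ℝ) ^ d := by
          rw [hS]; exact_mod_cast card_hyperbolicCross_succ_le_mul_harmonic_pow d (n + 1)
      _ ≤ ((n : ℝ) + 1) * (1 + Real.log ((n : ℝ) + 1)) ^ (d + 1 - 1) := by
          push_cast; gcongr
          exact_mod_cast harmonic_nonneg _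

/-- **Cardinality bound for the hyperbolic cross index set.**
For the hyperbolic cross index set `Λ^HC_n = {n ∈ ℕ₀^d : ∏_k (n_k + 1) ≤ n + 1}`
(here given as any finset `S` whose members are exactly those multi-indices), the
cardinality satisfies `|Λ^HC_n| ≤ ⌊(n+1)(1 + log(n+1))^{d-1}⌋`. -/
theorem hyperbolic_cross_card_le
    {d : ℕ} (hd : 1 ≤ d) (n : ℕ) (S : Finset (Fin d → ℕ))
    (hS : ∀ m : Fin d → ℕ, m ∈ S ↔ ∏ k, (m k + 1) ≤ n + 1) :
    (S.card : ℤ) ≤ ⌊((n : ℝ) + 1) * (1 + Real.log ((n : ℝ) + 1)) ^ (d - 1)⌋ :=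
  hyperbolic_cross_card_le_general n S hS
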